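/- Let a ≥ 0, fix x ∈ (0,∞) and λ > 1, and define the kernel J_n^a(x,t) = (n+1)·Σ_{k=0}^{∞} W_{n,k}^a(x)·χ_{n,k}(t), where χ_{n,k} is the characteristic function of the interval [k/(n+1), (k+1)/(n+1)], and α_n^a(x,y) = ∫_0^y J_n^a(x,t) dt. Then for n sufficiently large: (i) for every y with 0 ≤ y < x, α_n^a(x,y) ≤ (1/(x−y)²)·(λx(1+x)/(n+1)); and (ii) for every z with x < z < ∞, 1 − α_n^a(x,z) = ∫_z^{∞} J_n^a(x,t) dt ≤ (1/(z−x)²)·(λx(1+x)/(n+1)). -/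

import Mathlib

open MeasureTheory Filter

noncomputable section

/-- Rising factorial `(n)_i = n(n+1)⋯(n+i-1)`, with `(n)_0 = 1`. -/
def risingFac (n : ℕ) : ℕ → ℝ
  | 0 => 1
  | i + 1 => risingFac n i * ((n : ℝ) + i)

/-- `P_k(n,a) = Σ_{i=0}^{k} C(k,i) (n)_i a^(k-i)`. -/
def Pba (k n : ℕ) (a : ℝ) : ℝ :=
  ∑ i ∈ Finset.range (k + 1), (k.choose i : ℝ) * risingFac n i * a ^ (k - i)

/-- Generalized Baskakov basis function `W_{n,k}^a(x)`. -/
def Wgb (a : ℝ) (n k : ℕ) (x : ℝ) : ℝ :=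
  Real.exp (-(a * x) / (1 + x)) * (Pba k n a / (Nat.factorial k : ℝ)) * x ^ k /
    (1 + x) ^ (n + k)

/-- Generalized Baskakov–Kantorovich operator `K_n^a(f;x)`. -/
def Kgb (a : ℝ) (n : ℕ) (f : ℝ → ℝ) (x : ℝ) : ℝ :=
  ((n : ℝ) + 1) * ∑' k : ℕ,
    Wgb a n k x * ∫ t in ((k : ℝ) / ((n : ℝ) + 1))..(((k : ℝ) + 1) / ((n : ℝ) + 1)), f t


/-- The kernel `J_n^a(x,t) = (n+1)·Σ_k W_{n,k}^a(x)·χ_{n,k}(t)`, where `χ_{n,k}` is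
the characteristic function of `[k/(n+1), (k+1)/(n+1)]`. -/
def Jker (a : ℝ) (n : ℕ) (x t : ℝ) : ℝ :=
  ((n : ℝ) + 1) * ∑' k : ℕ,
    Wgb a n k x *
      Set.indicator (Set.Icc ((k : ℝ) / ((n : ℝ) + 1)) (((k : ℝ) + 1) / ((n : ℝ) + 1)))
        (fun _ => (1 : ℝ)) t

/-- `α_n^a(x,y) = ∫_0^y J_n^a(x,t) dt`. -/
def alphaKer (a : ℝ) (n : ℕ) (x y : ℝ) : ℝ :=
  ∫ t in (0 : ℝ)..y, Jker a n x t

/-! With `t = x/(1+x)`, the weights `W_{n,k}^a(x)` are the normalised coefficients of the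
generating function `e^{at} (1-t)^{-n}`, so they sum to `1`. The recurrence
`P_{k+1}(n,a) = a P_k(n,a) + n P_k(n+1,a)` turns `k`-moments of the weights of index `n` into
moments of the weights of index `n+1`, which gives the first two moments and hence
`K_n^a((t-x)^2; x) = (n x (1+x) + C)/(n+1)^2` with `C` independent of `n`.
Since `∫_S J_n^a(x,t) dt = (n+1) Σ_k W_{n,k}^a(x) |I_k ∩ S|` with
`I_k = [k/(n+1), (k+1)/(n+1)]`, the kernel has total mass `1`, and Chebyshev's inequality on
each `I_k` bounds the mass of `J_n^a(x,·)` on a set where `|t - x| ≥ d` by `K_n^a((t-x)^2; x)/d^2`,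
and for large `n` the constant `C` is absorbed by `λ`. -/

open Set
open scoped Nat ENNReal

theorem risingFac_eq_ascFactorial (n i : ℕ) : risingFac n i = (n.ascFactorial i : ℝ) := by
  induction i with
  | zero => simp [risingFac]
  | succ i ih => rw [risingFac, ih, Nat.ascFactorial_succ]; push_cast; ring

theorem risingFac_nonneg (n i : ℕ) : 0 ≤ risingFac n i := by
  rw [risingFac_eq_ascFactorial]; positivity

theorem risingFac_succ_eq_mul (n i : ℕ) :
    risingFac n (i + 1) = n * risingFac (n + 1) i := by
  rw [risingFac_eq_ascFactorial, risingFac_eq_ascFactorial, Nat.ascFactorial_succ]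
  exact_mod_cast (Nat.succ_ascFactorial n i).symm

theorem hasSum_risingFac_div_factorial_mul_pow {t : ℝ} (ht : |t| < 1) (n : ℕ) :
    HasSum (fun i => risingFac n i / i ! * t ^ i) ((1 - t)⁻¹ ^ n) := by
  cases n with
  | zero =>
    convert hasSum_single (f := fun i => risingFac 0 i / i ! * t ^ i) 0 fun i hi => ?_
    · simp [risingFac]
    · obtain ⟨j, rfl⟩ := Nat.exists_eq_succ_of_ne_zero hi
      simp [risingFac_eq_ascFactorial, Nat.zero_ascFactorial]
  | succ m =>
    have H := hasSum_choose_mul_geometric_of_norm_lt_one m (r := t) ht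
    rw [one_div, ← inv_pow] at H
    refine H.congr_fun fun i => ?_
    rw [risingFac_eq_ascFactorial, Nat.ascFactorial_eq_factorial_mul_choose, add_comm m i,
      Nat.choose_symm_add]
    push_cast
    field_simp

theorem Pba_div_factorial_mul_pow (k n : ℕ) (a t : ℝ) :
    Pba k n a / k ! * t ^ k =
      ∑ i ∈ Finset.range (k + 1),
        risingFac n i / i ! * t ^ i * ((a * t) ^ (k - i) / (k - i) !) := by
  rw [Pba, Finset.sum_div, Finset.sum_mul]
  refine Finset.sum_congr rfl fun i hi => ?_
  have hik : i ≤ k := Nat.lt_succ_iff.mp (Finset.mem_range.mp hi)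
  rw [Nat.cast_choose ℝ hik, mul_pow, ← pow_sub_mul_pow t hik]
  field_simp

theorem hasSum_Pba_div_factorial_mul_pow (a : ℝ) {t : ℝ} (ht : |t| < 1) (n : ℕ) :
    HasSum (fun k => Pba k n a / k ! * t ^ k) (Real.exp (a * t) * (1 - t)⁻¹ ^ n) := by
  have hrising := hasSum_risingFac_div_factorial_mul_pow ht n
  have hexp : HasSum (fun j => (a * t) ^ j / (j ! : ℝ)) (Real.exp (a * t)) := by
    rw [Real.exp_eq_exp_ℝ]; exact NormedSpace.expSeries_div_hasSum_exp (a * t)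
  have hrising_norm : Summable fun i => ‖risingFac n i / i ! * t ^ i‖ := by
    refine (hasSum_risingFac_div_factorial_mul_pow (t := |t|) (by simpa using ht) n).summable.congr
      fun i => ?_
    simp [abs_of_nonneg (risingFac_nonneg n i)]
  have hexp_norm : Summable fun j => ‖(a * t) ^ j / (j ! : ℝ)‖ := by
    simpa using Real.summable_pow_div_factorial |a * t|
  have H := hasSum_sum_range_mul_of_summable_norm' hrising_norm hrising.summable hexp_norm
    hexp.summable
  rw [hrising.tsum_eq, hexp.tsum_eq] at H
  rw [mul_comm (Real.exp _)]
  exact H.congr_fun fun k => Pba_div_factorial_mul_pow k n a t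

theorem hasSum_Wgb (a : ℝ) {x : ℝ} (hx : 0 ≤ x) (n : ℕ) :
    HasSum (fun k => Wgb a n k x) 1 := by
  have h1x : 0 < 1 + x := by linarith
  have ht : |x / (1 + x)| < 1 := by
    rw [abs_of_nonneg (by positivity), div_lt_one h1x]; linarith
  have H := (hasSum_Pba_div_factorial_mul_pow a ht n).mul_left
    (Real.exp (-(a * x) / (1 + x)) * (1 + x)⁻¹ ^ n)
  have h1t : 1 - x / (1 + x) = (1 + x)⁻¹ := by field_simp; ring
  rw [h1t, inv_inv, mul_mul_mul_comm, ← Real.exp_add, ← mul_pow, inv_mul_cancel₀ h1x.ne',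
    neg_div, mul_div_assoc, neg_add_cancel, Real.exp_zero, one_pow, mul_one] at H
  refine H.congr_fun fun k => ?_
  rw [Wgb, neg_div, mul_div_assoc, div_pow, pow_add, inv_pow]
  field_simp

theorem Wgb_nonneg {a x : ℝ} (ha : 0 ≤ a) (hx : 0 ≤ x) (n k : ℕ) : 0 ≤ Wgb a n k x := by
  have hP : 0 ≤ Pba k n a := Finset.sum_nonneg fun i _ => by
    have := risingFac_nonneg n i
    positivity
  unfold Wgb
  positivity

theorem Pba_succ (k n : ℕ) (a : ℝ) :
    Pba (k + 1) n a = a * Pba k n a + n * Pba k (n + 1) a := by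
  have hlow : a * Pba k n a =
      ∑ i ∈ Finset.range (k + 1),
          (k.choose (i + 1) : ℝ) * risingFac n (i + 1) * a ^ (k + 1 - (i + 1)) +
        (k.choose 0 : ℝ) * risingFac n 0 * a ^ (k + 1 - 0) := by
    rw [← Finset.sum_range_succ' (fun i => (k.choose i : ℝ) * risingFac n i * a ^ (k + 1 - i)),
      Finset.sum_range_succ, Nat.choose_succ_self, Nat.cast_zero, zero_mul, zero_mul, add_zero,
      Pba, Finset.mul_sum]
    refine Finset.sum_congr rfl fun i hi => ?_
    rw [Nat.sub_add_comm (Nat.lt_succ_iff.mp (Finset.mem_range.mp hi)), pow_succ]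
    ring
  have hhigh : n * Pba k (n + 1) a =
      ∑ i ∈ Finset.range (k + 1),
        (k.choose i : ℝ) * risingFac n (i + 1) * a ^ (k + 1 - (i + 1)) := by
    rw [Pba, Finset.mul_sum]
    refine Finset.sum_congr rfl fun i _ => ?_
    rw [risingFac_succ_eq_mul, Nat.add_sub_add_right]
    ring
  rw [Pba, Finset.sum_range_succ', hlow, hhigh]
  simp only [Nat.choose_succ_succ', Nat.cast_add, add_mul, Finset.sum_add_distrib,
    Nat.choose_zero_right]
  ring

theorem Wgb_succ {x : ℝ} (hx : 1 + x ≠ 0) (a : ℝ) (n k : ℕ) :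
    ((k : ℝ) + 1) * Wgb a n (k + 1) x =
      a * x / (1 + x) * Wgb a n k x + n * x * Wgb a (n + 1) k x := by
  simp only [Wgb, Pba_succ, Nat.factorial_succ, Nat.add_succ, Nat.succ_add, pow_succ]
  push_cast
  field_simp

theorem hasSum_natCast_mul_mul_Wgb {x : ℝ} (hx : 1 + x ≠ 0) {a : ℝ} {n : ℕ} {g : ℕ → ℝ}
    {s s' : ℝ} (hs : HasSum (fun k => g (k + 1) * Wgb a n k x) s)
    (hs' : HasSum (fun k => g (k + 1) * Wgb a (n + 1) k x) s') :
    HasSum (fun k => k * g k * Wgb a n k x) (a * x / (1 + x) * s + n * x * s') := by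
  rw [← hasSum_nat_add_iff' 1]
  simp only [Finset.range_one, Finset.sum_singleton, Nat.cast_zero, zero_mul, sub_zero]
  refine ((hs.mul_left _).add (hs'.mul_left _)).congr_fun fun k => ?_
  push_cast
  rw [mul_right_comm, Wgb_succ hx]
  ring

theorem hasSum_natCast_mul_Wgb (a : ℝ) {x : ℝ} (hx : 0 ≤ x) (n : ℕ) :
    HasSum (fun k => k * Wgb a n k x) (n * x + a * x / (1 + x)) := by
  have H := hasSum_natCast_mul_mul_Wgb (g := fun _ => 1) (by positivity)
    ((hasSum_Wgb a hx n).congr_fun fun k => one_mul _)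
    ((hasSum_Wgb a hx (n + 1)).congr_fun fun k => one_mul _)
  rw [mul_one, mul_one, add_comm] at H
  exact H.congr_fun fun k => by ring

theorem hasSum_natCast_sq_mul_Wgb (a : ℝ) {x : ℝ} (hx : 0 ≤ x) (n : ℕ) :
    HasSum (fun k : ℕ => (k : ℝ) ^ 2 * Wgb a n k x)
      (a * x / (1 + x) * (n * x + a * x / (1 + x) + 1) +
        n * x * ((n + 1) * x + a * x / (1 + x) + 1)) := by
  have hsucc (m : ℕ) : HasSum (fun k => ((k + 1 : ℕ) : ℝ) * Wgb a m k x)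
      (m * x + a * x / (1 + x) + 1) := by
    refine ((hasSum_natCast_mul_Wgb a hx m).add (hasSum_Wgb a hx m)).congr_fun fun k => ?_
    push_cast
    ring
  have H := hasSum_natCast_mul_mul_Wgb (g := fun k => (k : ℝ)) (by positivity) (hsucc n)
    (hsucc (n + 1))
  push_cast at H
  exact H.congr_fun fun k => by ring

theorem integral_sub_sq (x u v : ℝ) :
    ∫ t in u..v, (t - x) ^ 2 = ((v - x) ^ 3 - (u - x) ^ 3) / 3 := by
  rw [intervalIntegral.integral_comp_sub_right (fun t => t ^ 2), integral_pow]
  norm_num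

def sqMomentConst (a x : ℝ) : ℝ :=
  a * x / (1 + x) + (a * x / (1 + x) + 1 / 2 - x) ^ 2 + 1 / 12

theorem hasSum_Wgb_mul_integral_sub_sq (a : ℝ) {x : ℝ} (hx : 0 ≤ x) (n : ℕ) :
    HasSum (fun k : ℕ => Wgb a n k x * ∫ t in k / (n + 1 : ℝ)..(k + 1) / (n + 1 : ℝ), (t - x) ^ 2)
      ((n * x * (1 + x) + sqMomentConst a x) /
        (n + 1) ^ 3) := by
  have h1x : 1 + x ≠ 0 := by positivity
  set m : ℝ := n + 1
  have hm : m ≠ 0 := by positivity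
  have H := ((hasSum_natCast_sq_mul_Wgb a hx n).mul_left (1 / m ^ 3)).add
    (((hasSum_natCast_mul_Wgb a hx n).mul_left (1 / m ^ 3 - 2 * x / m ^ 2)).add
      ((hasSum_Wgb a hx n).mul_left (x ^ 2 / m - x / m ^ 2 + 1 / (3 * m ^ 3))))
  have hval : 1 / m ^ 3 * (a * x / (1 + x) * (n * x + a * x / (1 + x) + 1) +
        n * x * ((n + 1) * x + a * x / (1 + x) + 1)) +
      ((1 / m ^ 3 - 2 * x / m ^ 2) * (n * x + a * x / (1 + x)) +
        (x ^ 2 / m - x / m ^ 2 + 1 / (3 * m ^ 3)) * 1) =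
      (n * x * (1 + x) + sqMomentConst a x) /
        m ^ 3 := by
    simp only [m, sqMomentConst]
    field_simp
    ring
  rw [hval] at H
  refine H.congr_fun fun k => ?_
  rw [integral_sub_sq]
  field_simp
  ring

theorem Kgb_sub_sq (a : ℝ) {x : ℝ} (hx : 0 ≤ x) (n : ℕ) :
    Kgb a n (fun t => (t - x) ^ 2) x =
      (n * x * (1 + x) + sqMomentConst a x) /
        (n + 1) ^ 2 := by
  rw [Kgb, (hasSum_Wgb_mul_integral_sub_sq a hx n).tsum_eq]
  field_simp

theorem integral_tsum_mul_indicator_one {α : Type*} [MeasurableSpace α] {μ : Measure α}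
    {c : ℕ → ℝ} {I : ℕ → Set α} {M : ℝ≥0∞} (hc : Summable fun k => ‖c k‖)
    (hI : ∀ k, MeasurableSet (I k)) (hM : M ≠ ∞) (hμ : ∀ k, μ (I k) ≤ M) :
    ∫ t, ∑' k, c k * (I k).indicator (fun _ => (1 : ℝ)) t ∂μ = ∑' k, c k * μ.real (I k) := by
  have hval (c : ℝ) (k : ℕ) :
      ∫ t, c * (I k).indicator (fun _ => (1 : ℝ)) t ∂μ = c * μ.real (I k) := by
    rw [integral_const_mul, integral_indicator_const _ (hI k), smul_eq_mul, mul_one]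
  have hint (k : ℕ) : Integrable (fun t => c k * (I k).indicator (fun _ => (1 : ℝ)) t) μ :=
    ((integrableOn_const (ne_top_of_le_ne_top hM (hμ k))).integrable_indicator (hI k)).const_mul
      (c k)
  have hnorm : Summable fun k => ∫ t, ‖c k * (I k).indicator (fun _ => (1 : ℝ)) t‖ ∂μ := by
    refine (hc.mul_right M.toReal).of_nonneg_of_le (fun k => integral_nonneg fun t => norm_nonneg _)
      fun k => ?_
    have hnorm_eq : ∀ t, ‖c k * (I k).indicator (fun _ => (1 : ℝ)) t‖ =
        ‖c k‖ * (I k).indicator (fun _ => (1 : ℝ)) t := fun t => by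
      rw [norm_mul, Real.norm_of_nonneg (indicator_nonneg (fun _ _ => zero_le_one) t)]
    simp_rw [hnorm_eq, hval]
    exact mul_le_mul_of_nonneg_left (ENNReal.toReal_mono hM (hμ k)) (norm_nonneg _)
  rw [← integral_tsum_of_summable_integral_norm hint hnorm]
  exact tsum_congr fun k => hval (c k) k

theorem integral_Jker {a x : ℝ} (ha : 0 ≤ a) (hx : 0 ≤ x) (n : ℕ) (S : Set ℝ) :
    ∫ t in S, Jker a n x t =
      (n + 1) * ∑' k : ℕ,
        Wgb a n k x * volume.real (Icc (k / (n + 1 : ℝ)) ((k + 1) / (n + 1)) ∩ S) := by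
  have hW : Summable fun k => ‖Wgb a n k x‖ :=
    (hasSum_Wgb a hx n).summable.congr fun k => (Real.norm_of_nonneg (Wgb_nonneg ha hx n k)).symm
  have hvol (k : ℕ) : volume.restrict S (Icc (k / (n + 1 : ℝ)) ((k + 1) / (n + 1))) ≤
      ENNReal.ofReal (1 / (n + 1)) := by
    refine (Measure.restrict_apply_le _ _).trans (le_of_eq ?_)
    rw [Real.volume_Icc, ← sub_div, add_sub_cancel_left]
  unfold Jker
  rw [integral_const_mul,
    integral_tsum_mul_indicator_one hW (fun _ => measurableSet_Icc) ENNReal.ofReal_ne_top hvol]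
  simp_rw [measureReal_restrict_apply measurableSet_Icc]

theorem integral_Ioi_Jker {a x : ℝ} (ha : 0 ≤ a) (hx : 0 ≤ x) (n : ℕ) :
    ∫ t in Ioi 0, Jker a n x t = 1 := by
  have hvol (k : ℕ) : volume.real (Icc (k / (n + 1 : ℝ)) ((k + 1) / (n + 1)) ∩ Ici 0) =
      1 / (n + 1) := by
    rw [inter_eq_left.2 (Icc_subset_Ici_self.trans (Ici_subset_Ici.2 (by positivity))),
      Real.volume_real_Icc_of_le (by gcongr; linarith), ← sub_div, add_sub_cancel_left]
  rw [← integral_Ici_eq_integral_Ioi, integral_Jker ha hx, tsum_congr fun k => by rw [hvol k],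
    tsum_mul_right, (hasSum_Wgb a hx n).tsum_eq]
  field_simp

theorem one_sub_alphaKer {a x z : ℝ} (ha : 0 ≤ a) (hx : 0 ≤ x) (n : ℕ) (hz : 0 ≤ z) :
    1 - alphaKer a n x z = ∫ t in Ioi z, Jker a n x t := by
  have hint : IntegrableOn (Jker a n x) (Ioi 0) :=
    Integrable.of_integral_ne_zero (by rw [integral_Ioi_Jker ha hx]; exact one_ne_zero)
  rw [← integral_Ioi_Jker ha hx n, alphaKer,
    ← intervalIntegral.integral_interval_add_Ioi hint (hint.mono_set (Ioi_subset_Ioi hz))]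
  ring

theorem volume_real_Icc_inter_le {x d u v : ℝ} {S : Set ℝ} (hd : 0 < d) (huv : u ≤ v)
    (hS : ∀ t ∈ S, d ^ 2 ≤ (t - x) ^ 2) :
    volume.real (Icc u v ∩ S) ≤ (∫ t in u..v, (t - x) ^ 2) / d ^ 2 := by
  rw [le_div_iff₀ (by positivity), mul_comm, intervalIntegral.integral_of_le huv,
    ← integral_Icc_eq_integral_Ioc]
  calc d ^ 2 * volume.real (Icc u v ∩ S)
      ≤ d ^ 2 * (volume.restrict (Icc u v)).real {t | d ^ 2 ≤ (t - x) ^ 2} := by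
        rw [measureReal_restrict_apply' measurableSet_Icc]
        exact mul_le_mul_of_nonneg_left (measureReal_mono (fun t ht => ⟨hS t ht.2, ht.1⟩)
          ((measure_mono inter_subset_right).trans_lt measure_Icc_lt_top).ne) (by positivity)
    _ ≤ ∫ t in Icc u v, (t - x) ^ 2 :=
        mul_meas_ge_le_integral_of_nonneg (ae_of_all _ fun t => sq_nonneg _)
          ((continuous_id.sub continuous_const).pow 2).integrableOn_Icc _

theorem integral_Jker_le_Kgb_div {a x d : ℝ} (ha : 0 ≤ a) (hx : 0 ≤ x) (n : ℕ) {S : Set ℝ}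
    (hd : 0 < d) (hS : ∀ t ∈ S, d ^ 2 ≤ (t - x) ^ 2) :
    ∫ t in S, Jker a n x t ≤ Kgb a n (fun t => (t - x) ^ 2) x / d ^ 2 := by
  have hmoment := hasSum_Wgb_mul_integral_sub_sq a hx n
  rw [integral_Jker ha hx, Kgb, mul_div_assoc, ← tsum_div_const]
  have hterm (k : ℕ) :
      Wgb a n k x * volume.real (Icc (k / (n + 1 : ℝ)) ((k + 1) / (n + 1)) ∩ S) ≤
        (Wgb a n k x * ∫ t in k / (n + 1 : ℝ)..(k + 1) / (n + 1 : ℝ), (t - x) ^ 2) / d ^ 2 := by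
    rw [mul_div_assoc]
    exact mul_le_mul_of_nonneg_left
      (volume_real_Icc_inter_le hd (by gcongr; linarith) hS) (Wgb_nonneg ha hx n k)
  have hsummable := hmoment.summable.div_const (d ^ 2)
  refine mul_le_mul_of_nonneg_left (Summable.tsum_le_tsum hterm ?_ hsummable) (by positivity)
  exact hsummable.of_nonneg_of_le (fun k => mul_nonneg (Wgb_nonneg ha hx n k) measureReal_nonneg)
    hterm

theorem eventually_div_sq_le_div {c C lam : ℝ} (hc : 0 < c) (hlam : 1 < lam) :
    ∀ᶠ n : ℕ in atTop, (n * c + C) / (n + 1) ^ 2 ≤ lam * c / (n + 1) := by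
  filter_upwards [eventually_ge_atTop ⌈C / ((lam - 1) * c)⌉₊] with n hn
  have hC : C ≤ n * ((lam - 1) * c) :=
    (div_le_iff₀ (by nlinarith)).1 ((Nat.ceil_le).1 hn)
  rw [sq, ← div_div, div_le_div_iff_of_pos_right (by positivity), div_le_iff₀ (by positivity)]
  nlinarith [mul_pos (zero_lt_one.trans hlam) hc]

/-- estimates for the kernel distribution function. -/
theorem statement19 (a lam x : ℝ) (ha : 0 ≤ a) (hx : 0 < x) (hlam : 1 < lam) :
    ∃ N : ℕ, ∀ n ≥ N,
      (∀ y : ℝ, 0 ≤ y → y < x →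
        alphaKer a n x y ≤ (1 / (x - y) ^ 2) * (lam * x * (1 + x) / ((n : ℝ) + 1))) ∧
      (∀ z : ℝ, x < z →
        (1 - alphaKer a n x z = ∫ t in Set.Ioi z, Jker a n x t) ∧
          1 - alphaKer a n x z ≤ (1 / (z - x) ^ 2) * (lam * x * (1 + x) / ((n : ℝ) + 1))) := by
  obtain ⟨N, hN⟩ := eventually_atTop.1 (eventually_div_sq_le_div (c := x * (1 + x))
    (C := sqMomentConst a x) (by positivity) hlam)
  refine ⟨N, fun n hn => ?_⟩
  have hK : Kgb a n (fun t => (t - x) ^ 2) x ≤ lam * x * (1 + x) / (n + 1) := by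
    rw [Kgb_sub_sq a hx.le]; simpa only [mul_assoc] using hN n hn
  refine ⟨fun y hy hyx => ?_, fun z hz => ?_⟩
  · rw [alphaKer, intervalIntegral.integral_of_le hy, one_div_mul_eq_div]
    refine (integral_Jker_le_Kgb_div ha hx.le n (sub_pos.2 hyx) fun t ht => ?_).trans
      (by gcongr)
    nlinarith [ht.2]
  · have hsplit := one_sub_alphaKer ha hx.le n (hx.trans hz).le
    refine ⟨hsplit, ?_⟩
    rw [hsplit, one_div_mul_eq_div]
    refine (integral_Jker_le_Kgb_div ha hx.le n (sub_pos.2 hz) fun t ht => ?_).trans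
      (by gcongr)
    nlinarith [mem_Ioi.1 ht]
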